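/- Let V = ℂ³ with basis {u | v, h} (u even; v, h odd), bracket [u,v] = h (and [v,u] = -h, all others zero). Suppose α(u) = μ₀ u, α(v) = μ₁₁ v + μ₂₁ h, α(h) = μ₀μ₁₁ h with μ₂₁ ≠ 0 and (μ₀ = 1 or μ₁₁ = 0). Then with b₀ = μ₂₁⁻¹, the even bracket-preserving automorphism φ defined by φ(u) = b₀ u, φ(v) = v, φ(h) = b₀ h satisfies (φ ∘ α ∘ φ⁻¹)(u) = μ₀ u, (φ ∘ α ∘ φ⁻¹)(v) = μ₁₁ v + h, (φ ∘ α ∘ φ⁻¹)(h) = μ₁₁ h. -/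

import Mathlib

namespace Stmt3

/-- V = ℂ³ with basis u = e₀ (even), v = e₁, h = e₂ (odd). -/
abbrev V : Type := Fin 3 → ℂ

/-- super bracket: [u,v] = h = -[v,u], all other brackets of basis elements zero. -/
def br (x y : V) : V := ![0, 0, x 0 * y 1 - x 1 * y 0]

/-- α(u)=μ₀u, α(v)=μ₁₁v+μ₂₁h, α(h)=μ₀μ₁₁h. -/
def al (μ0 μ11 μ21 : ℂ) (x : V) : V :=
  ![μ0 * x 0, μ11 * x 1, μ21 * x 1 + μ0 * μ11 * x 2]

/-- φ(u)=b₀u, φ(v)=v, φ(h)=b₀h with b₀=μ₂₁⁻¹. -/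
noncomputable def ph (μ21 : ℂ) (x : V) : V := ![μ21⁻¹ * x 0, x 1, μ21⁻¹ * x 2]

/-- the target map: u ↦ μ₀u, v ↦ μ₁₁v + h, h ↦ μ₁₁h. -/
def be (μ0 μ11 : ℂ) (x : V) : V := ![μ0 * x 0, μ11 * x 1, x 1 + μ11 * x 2]

theorem ph_inv_ph {μ : ℂ} (hμ : μ ≠ 0) (x : V) : ph μ⁻¹ (ph μ x) = x := by
  funext i
  fin_cases i <;> simp [ph, hμ]

theorem ph_ph_inv {μ : ℂ} (hμ : μ ≠ 0) (x : V) : ph μ (ph μ⁻¹ x) = x := by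
  simpa using ph_inv_ph (inv_ne_zero hμ) x

theorem ph_bijective {μ : ℂ} (hμ : μ ≠ 0) : Function.Bijective (ph μ) :=
  Function.bijective_iff_has_inverse.2 ⟨ph μ⁻¹, ph_inv_ph hμ, ph_ph_inv hμ⟩

theorem ph_br (μ : ℂ) (x y : V) : ph μ (br x y) = br (ph μ x) (ph μ y) := by
  funext i
  fin_cases i <;> simp [ph, br]
  ring

theorem ph_al {μ0 μ11 μ21 : ℂ} (h21 : μ21 ≠ 0) (hμ : μ0 * μ11 = μ11) (x : V) :
    ph μ21 (al μ0 μ11 μ21 x) = be μ0 μ11 (ph μ21 x) := by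
  funext i
  fin_cases i <;> simp [ph, al, be, hμ] <;> field_simp

theorem stmt3 (μ0 μ11 μ21 : ℂ) (h21 : μ21 ≠ 0) (hcase : μ0 = 1 ∨ μ11 = 0) :
    Function.Bijective (ph μ21) ∧
    (∀ x y : V, ph μ21 (br x y) = br (ph μ21 x) (ph μ21 y)) ∧
    (∀ x : V, ph μ21 (al μ0 μ11 μ21 x) = be μ0 μ11 (ph μ21 x)) :=
  ⟨ph_bijective h21, ph_br μ21, ph_al h21 (mul_left_eq_self₀.2 hcase)⟩

end Stmt3
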